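/- arXiv:math/0609380 — 3 statements merged into one kernel-verified Lean document; each statement's English description precedes it below -/
import Mathlib

section
/- Let m ≥ 1 be an integer and let Q(z,χ,τ) = τ + i·τ^m·z·χ + τ^{m+1}·Θ(z,χ,τ) with Θ ∈ ℂ[[z,χ,τ]]. Let F, G ∈ ℂ[[z,w]] with F(0,0) = G(0,0) = 0, G(z,0) = 0, F(z,0) ≢ 0, satisfying the formal identity G(z, Q(z,χ,τ)) = Q( F(z,Q(z,χ,τ)), F̄(χ,τ), Ḡ(χ,τ) ), where F̄ and Ḡ denote the power series obtained by conjugating the coefficients of F and G. Then for every ℓ ≤ m, the power series coefficient ∂^ℓG/∂w^ℓ(z,0) is a constant independent of z, and this constant is real. -/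
open scoped ComplexConjugate

open Classical in
/-- Composition of multivariate formal power series: `f` in variables `σ` with
the substitution `g : σ → MvPowerSeries τ R`.  This gives the usual substitution
whenever each `g i` has zero constant term. -/
noncomputable def pscomp {σ τ : Type*} [Fintype σ] {R : Type*} [CommRing R]
    (f : MvPowerSeries σ R) (g : σ → MvPowerSeries τ R) : MvPowerSeries τ R :=
  fun d => MvPowerSeries.coeff d
    (MvPolynomial.aeval g
      (MvPowerSeries.trunc R
        (Finsupp.equivFunOnFinite.symm fun _ => (d.sum fun _ n => n) + 1) f))

/-- Conjugation of the coefficients of a formal power series over `ℂ`. -/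
noncomputable def psConj {σ : Type*} (f : MvPowerSeries σ ℂ) : MvPowerSeries σ ℂ :=
  MvPowerSeries.map (starRingEnd ℂ) f

/-!
Give `z, χ, τ` the weights `0, m + 1, 1` and work modulo the ideal of series of weighted
order `> m`. There `Q ≡ τ`, because every term of `Q - τ` is divisible by `τ^m χ` or by
`τ^{m+1}`, so the left side of the mapping identity is `G(z, τ)`. On the right, `F̄(χ, τ)` and
`Ḡ(χ, τ)` have weighted order `≥ 1`, and every term of `Q - τ` has degree `≥ m + 1` in the last
two variables, so the right side is `Ḡ(χ, τ)`. Comparing the coefficients of `z^j τ^ℓ`,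
`ℓ ≤ m`, gives `G_{jℓ} = [j = 0] conj G_{0ℓ}`.
-/

open MvPowerSeries Finsupp Filter

namespace MvPowerSeries

variable {σ R : Type*} [CommRing R] (w : σ → ℕ)

def weightedOrderIdeal (n : ℕ) : Ideal (MvPowerSeries σ R) where
  carrier := {f | (n : ℕ∞) ≤ f.weightedOrder w}
  add_mem' hf hg := (le_min hf hg).trans (min_weightedOrder_le_add w)
  zero_mem' := by simp
  smul_mem' _ _ hf := (le_add_left hf).trans (le_weightedOrder_mul w)

@[simp]
theorem weightedOrderIdeal_zero : weightedOrderIdeal (R := R) w 0 = ⊤ :=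
  Ideal.eq_top_iff_one _ |>.mpr (by simp [weightedOrderIdeal])

variable {w}

theorem mem_weightedOrderIdeal_iff {n : ℕ} {f : MvPowerSeries σ R} :
    f ∈ weightedOrderIdeal w n ↔ ∀ d, weight w d < n → coeff d f = 0 :=
  ⟨fun hf _ hd => coeff_eq_zero_of_lt_weightedOrder w (lt_of_lt_of_le (by exact_mod_cast hd) hf),
    nat_le_weightedOrder w⟩

theorem coeff_eq_of_sub_mem_weightedOrderIdeal {n : ℕ} {f g : MvPowerSeries σ R}
    (h : f - g ∈ weightedOrderIdeal w n) {d : σ →₀ ℕ} (hd : weight w d < n) :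
    coeff d f = coeff d g :=
  sub_eq_zero.mp (by rw [← map_sub]; exact mem_weightedOrderIdeal_iff.mp h d hd)

theorem mul_mem_weightedOrderIdeal {a b : ℕ} {f g : MvPowerSeries σ R}
    (hf : f ∈ weightedOrderIdeal w a) (hg : g ∈ weightedOrderIdeal w b) :
    f * g ∈ weightedOrderIdeal w (a + b) :=
  le_trans (by push_cast; exact add_le_add hf hg) (le_weightedOrder_mul w)

theorem pow_mem_weightedOrderIdeal {a : ℕ} {f : MvPowerSeries σ R}
    (hf : f ∈ weightedOrderIdeal w a) (k : ℕ) : f ^ k ∈ weightedOrderIdeal w (k * a) := by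
  induction k with
  | zero => simp
  | succ k ih => simpa [pow_succ, add_mul] using mul_mem_weightedOrderIdeal ih hf

theorem prod_mem_weightedOrderIdeal {ι : Type*} {s : Finset ι} {a : ι → ℕ}
    {f : ι → MvPowerSeries σ R} (hf : ∀ i ∈ s, f i ∈ weightedOrderIdeal w (a i)) :
    ∏ i ∈ s, f i ∈ weightedOrderIdeal w (∑ i ∈ s, a i) := by
  classical
  induction s using Finset.induction_on with
  | empty => simp
  | insert j s hj ih =>
    rw [Finset.prod_insert hj, Finset.sum_insert hj]
    exact mul_mem_weightedOrderIdeal (hf j (by simp)) (ih fun i hi => hf i (by simp [hi]))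

theorem X_mem_weightedOrderIdeal [Nontrivial R] {n : ℕ} {i : σ} (h : n ≤ w i) :
    (X i : MvPowerSeries σ R) ∈ weightedOrderIdeal w n := by
  show (n : ℕ∞) ≤ _
  rw [X, weightedOrder_monomial_of_ne_zero w one_ne_zero, weight_single, smul_eq_mul, one_mul]
  exact_mod_cast h

theorem coeff_mapDomain_rename {τ : Type*} {e : σ → τ} [TendstoCofinite e]
    (he : Function.Injective e) (f : MvPowerSeries σ R) (a : σ →₀ ℕ) :
    coeff (a.mapDomain e) (rename e f) = coeff a f := by
  simpa [embDomain_eq_mapDomain] using coeff_embDomain_rename ⟨e, he⟩ f a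

end MvPowerSeries

section pscomp

variable {σ τ R : Type*} [Fintype σ] [CommRing R]

open Classical in
theorem coeff_pscomp (f : MvPowerSeries σ R) (g : σ → MvPowerSeries τ R) (d : τ →₀ ℕ) :
    coeff d (pscomp f g) =
      ∑ e ∈ Finset.Iio (equivFunOnFinite.symm fun _ => d.degree + 1),
        coeff e f * coeff d (∏ i, g i ^ e i) := by
  have h : pscomp f g d = coeff d (MvPolynomial.aeval g
      (trunc R (equivFunOnFinite.symm fun _ => (d.sum fun _ n => n) + 1) f)) := rfl
  rw [coeff_apply (pscomp f g), h, show (d.sum fun _ n => n) = d.degree from (degree_apply d).symm,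
    trunc, truncFinset_apply, map_sum, map_sum]
  refine Finset.sum_congr rfl fun e _ => ?_
  rw [MvPolynomial.aeval_monomial, MvPowerSeries.algebraMap_apply, Algebra.algebraMap_self,
    RingHom.id_apply, coeff_C_mul, Finsupp.prod_fintype _ _ (by simp)]

open Classical in
theorem mem_Iio_const_succ_of_degree_le [Nonempty σ] {e : σ →₀ ℕ} {N : ℕ} (h : e.degree ≤ N) :
    e ∈ Finset.Iio (equivFunOnFinite.symm fun _ : σ => N + 1) := by
  have he : ∀ i, e i ≤ N := fun i => (le_degree i e).trans h
  rw [Finset.mem_Iio]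
  refine lt_of_le_of_ne (fun i => by simpa using (he i).trans N.le_succ) fun hc => ?_
  have := he (Classical.arbitrary σ)
  rw [hc] at this
  simp at this

theorem pscomp_sub (f f' : MvPowerSeries σ R) (g : σ → MvPowerSeries τ R) :
    pscomp (f - f') g = pscomp f g - pscomp f' g := by
  ext d
  simp only [map_sub, coeff_pscomp, sub_mul, Finset.sum_sub_distrib]

theorem pscomp_X (g : σ → MvPowerSeries τ R) {i : σ} (hg : constantCoeff (g i) = 0) :
    pscomp (X i) g = g i := by
  classical
  have : Nonempty σ := ⟨i⟩
  ext d
  have hterm : coeff (single i 1) (X i) * coeff d (∏ j, g j ^ single i 1 j) = coeff d (g i) := by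
    simp [single_apply]
  rw [coeff_pscomp, Finset.sum_eq_single (single i 1) (fun b _ hb => by
    rw [coeff_X, if_neg hb, zero_mul]), hterm]
  intro hi
  obtain rfl : d = 0 := by
    by_contra hd
    refine hi (mem_Iio_const_succ_of_degree_le ?_)
    rw [degree_single, Nat.one_le_iff_ne_zero, Ne, degree_eq_zero_iff]
    exact hd
  rw [hterm, coeff_zero_eq_constantCoeff_apply, hg]

theorem pscomp_X_comp [Nonempty σ] (e : σ → τ) (f : MvPowerSeries σ R) :
    pscomp f (fun i => X (e i)) = rename e f := by
  classical
  ext d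
  have hmono (a : σ →₀ ℕ) :
      ∏ i, (X (e i) : MvPowerSeries τ R) ^ a i = monomial (a.mapDomain e) 1 := by
    rw [monomial_mapDomain_apply_one, Finsupp.prod_fintype _ _ (by simp)]
  simp only [coeff_pscomp, coeff_rename, hmono, coeff_monomial, mul_ite, mul_one, mul_zero]
  rw [← Finset.sum_filter]
  refine Finset.sum_congr (Finset.ext fun a => ?_) fun _ _ => rfl
  simp only [Finset.mem_filter, Set.Finite.mem_toFinset, Set.mem_preimage, Set.mem_singleton_iff]
  constructor
  · exact fun h => h.2.symm
  · rintro rfl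
    exact ⟨mem_Iio_const_succ_of_degree_le (degree_mapDomain e a).ge, rfl⟩

theorem pscomp_sub_pscomp_mem_weightedOrderIdeal {w : τ → ℕ} {n : ℕ} (f : MvPowerSeries σ R)
    {g g' : σ → MvPowerSeries τ R} (h : ∀ i, g i - g' i ∈ weightedOrderIdeal w n) :
    pscomp f g - pscomp f g' ∈ weightedOrderIdeal w n := by
  rw [mem_weightedOrderIdeal_iff]
  intro d hd
  rw [map_sub, coeff_pscomp, coeff_pscomp, ← Finset.sum_sub_distrib]
  refine Finset.sum_eq_zero fun e _ => ?_
  have hprod : ∏ i, g i ^ e i - ∏ i, g' i ^ e i ∈ weightedOrderIdeal w n := by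
    rw [← Ideal.Quotient.eq]
    simp only [map_prod, map_pow, Ideal.Quotient.eq.mpr (h _)]
  rw [← mul_sub, ← map_sub, mem_weightedOrderIdeal_iff.mp hprod d hd, mul_zero]

theorem pscomp_mem_weightedOrderIdeal {w : τ → ℕ} {w' : σ → ℕ} {n : ℕ} {f : MvPowerSeries σ R}
    (hf : f ∈ weightedOrderIdeal w' n) {g : σ → MvPowerSeries τ R}
    (hg : ∀ i, g i ∈ weightedOrderIdeal w (w' i)) :
    pscomp f g ∈ weightedOrderIdeal w n := by
  rw [mem_weightedOrderIdeal_iff]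
  intro d hd
  rw [coeff_pscomp]
  refine Finset.sum_eq_zero fun e _ => ?_
  by_cases he : weight w' e < n
  · rw [mem_weightedOrderIdeal_iff.mp hf e he, zero_mul]
  have hprod : ∏ i, g i ^ e i ∈ weightedOrderIdeal w (weight w' e) := by
    rw [weight_eq_sum]
    exact prod_mem_weightedOrderIdeal fun i _ => pow_mem_weightedOrderIdeal (hg i) (e i)
  rw [mem_weightedOrderIdeal_iff.mp hprod d (by omega), mul_zero]

theorem pscomp_mem_weightedOrderIdeal_one {w : τ → ℕ} {f : MvPowerSeries σ R}
    (hf : constantCoeff f = 0) {g : σ → MvPowerSeries τ R}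
    (hg : ∀ i, g i ∈ weightedOrderIdeal w 1) :
    pscomp f g ∈ weightedOrderIdeal w 1 :=
  pscomp_mem_weightedOrderIdeal (w' := fun _ => 1)
    (show 1 ≤ f.order from one_le_order_iff_constCoeff_eq_zero.mpr hf) hg

theorem coeff_pscomp_eq_of_sub_X_mem {w : τ → ℕ} {w' : σ → ℕ} {n : ℕ} {f : MvPowerSeries σ R}
    {i : σ} (hf : f - X i ∈ weightedOrderIdeal w' n) {g : σ → MvPowerSeries τ R}
    (hg : ∀ j, g j ∈ weightedOrderIdeal w (w' j)) (hgi : constantCoeff (g i) = 0)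
    {d : τ →₀ ℕ} (hd : weight w d < n) : coeff d (pscomp f g) = coeff d (g i) := by
  refine coeff_eq_of_sub_mem_weightedOrderIdeal ?_ hd
  rw [← pscomp_X g hgi, ← pscomp_sub]
  exact pscomp_mem_weightedOrderIdeal hf hg

end pscomp

section ThreeVariables

variable {R : Type*} [CommRing R]

theorem pscomp_X_zero_X_two (f : MvPowerSeries (Fin 2) R) :
    pscomp f ![X 0, X 2] = rename ![(0 : Fin 3), 2] f := by
  rw [← pscomp_X_comp]
  congr 1
  ext1 i
  fin_cases i <;> rfl

theorem pscomp_X_one_X_two (f : MvPowerSeries (Fin 2) R) :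
    pscomp f ![X 1, X 2] = rename ![(1 : Fin 3), 2] f := by
  rw [← pscomp_X_comp]
  congr 1
  ext1 i
  fin_cases i <;> rfl

theorem coeff_single_add_single_rename_zero_two (f : MvPowerSeries (Fin 2) R) (j ℓ : ℕ) :
    coeff (single 0 j + single 2 ℓ) (rename ![(0 : Fin 3), 2] f) =
      coeff (single 0 j + single 1 ℓ) f := by
  have he : Function.Injective ![(0 : Fin 3), 2] := by decide
  rw [← coeff_mapDomain_rename he, mapDomain_add, mapDomain_single, mapDomain_single]
  rfl

theorem coeff_single_add_single_rename_one_two (f : MvPowerSeries (Fin 2) R) (j ℓ : ℕ) :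
    coeff (single 0 j + single 2 ℓ) (rename ![(1 : Fin 3), 2] f) =
      if j = 0 then coeff (single 1 ℓ) f else 0 := by
  split_ifs with hj
  · have he : Function.Injective ![(1 : Fin 3), 2] := by decide
    rw [hj, single_zero, zero_add, ← coeff_mapDomain_rename he, mapDomain_single]
    rfl
  · refine coeff_rename_eq_zero _ f fun ⟨a, ha⟩ => hj ?_
    simpa [mapDomain_of_notMem_range, Fin.forall_fin_two] using (congrArg (· 0) ha).symm

theorem pscomp_X_one_X_two_mem_weightedOrderIdeal [Nontrivial R] {w : Fin 3 → ℕ}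
    (hw₁ : 1 ≤ w 1) (hw₂ : 1 ≤ w 2) {f : MvPowerSeries (Fin 2) R} (hf : constantCoeff f = 0) :
    pscomp f ![X 1, X 2] ∈ weightedOrderIdeal w 1 := by
  refine pscomp_mem_weightedOrderIdeal_one hf fun i => ?_
  fin_cases i
  exacts [X_mem_weightedOrderIdeal hw₁, X_mem_weightedOrderIdeal hw₂]

theorem sub_X_two_mem_weightedOrderIdeal [Nontrivial R] {w : Fin 3 → ℕ} (hw₁ : 1 ≤ w 1)
    (hw₂ : 1 ≤ w 2) {m : ℕ} {a : R} {Θ Q : MvPowerSeries (Fin 3) R}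
    (hQ : Q = X 2 + C a * (X 2 ^ m * X 0 * X 1) + X 2 ^ (m + 1) * Θ) :
    Q - X 2 ∈ weightedOrderIdeal w (m + 1) := by
  have hX₂ := X_mem_weightedOrderIdeal (R := R) hw₂
  have hmid : (X 2 ^ m * X 0 * X 1 : MvPowerSeries (Fin 3) R) ∈
      weightedOrderIdeal w (m * 1 + 0 + 1) :=
    mul_mem_weightedOrderIdeal (mul_mem_weightedOrderIdeal (pow_mem_weightedOrderIdeal hX₂ m)
      (X_mem_weightedOrderIdeal (Nat.zero_le _))) (X_mem_weightedOrderIdeal hw₁)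
  have htail := Ideal.mul_mem_right Θ _ (pow_mem_weightedOrderIdeal hX₂ (m + 1))
  rw [hQ, add_sub_right_comm, add_sub_cancel_left]
  simp only [mul_one, add_zero] at hmid htail
  exact add_mem (Ideal.mul_mem_left _ _ hmid) htail

theorem coeff_pscomp_X_zero_eq_of_sub_X_two_mem {w : Fin 3 → ℕ} {n : ℕ}
    {Q : MvPowerSeries (Fin 3) R} (hQ : Q - X 2 ∈ weightedOrderIdeal w n)
    (f : MvPowerSeries (Fin 2) R) {d : Fin 3 →₀ ℕ} (hd : weight w d < n) :
    coeff d (pscomp f ![X 0, Q]) = coeff d (rename ![(0 : Fin 3), 2] f) := by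
  rw [← pscomp_X_zero_X_two]
  refine coeff_eq_of_sub_mem_weightedOrderIdeal
    (pscomp_sub_pscomp_mem_weightedOrderIdeal f fun i => ?_) hd
  fin_cases i
  · simp
  · exact hQ

end ThreeVariables

theorem coeff_psConj {σ : Type*} (f : MvPowerSeries σ ℂ) (d : σ →₀ ℕ) :
    coeff d (psConj f) = conj (coeff d f) :=
  coeff_map _ _ _

theorem constantCoeff_psConj {σ : Type*} (f : MvPowerSeries σ ℂ) :
    constantCoeff (psConj f) = conj (constantCoeff f) :=
  constantCoeff_map _ _

theorem coeff_eq_ite_conj_of_mapping_identity {m : ℕ} {a : ℂ} {Θ Q : MvPowerSeries (Fin 3) ℂ}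
    (hQ : Q = X 2 + C a * (X 2 ^ m * X 0 * X 1) + X 2 ^ (m + 1) * Θ)
    {F G : MvPowerSeries (Fin 2) ℂ} (hF0 : constantCoeff F = 0) (hG0 : constantCoeff G = 0)
    (hmap : pscomp G ![X 0, Q] = pscomp Q ![pscomp F ![X 0, Q],
      pscomp (psConj F) ![X 1, X 2], pscomp (psConj G) ![X 1, X 2]])
    (j : ℕ) {ℓ : ℕ} (hℓ : ℓ ≤ m) :
    coeff (single 0 j + single 1 ℓ) G = if j = 0 then conj (coeff (single 1 ℓ) G) else 0 := by
  set w : Fin 3 → ℕ := ![0, m + 1, 1]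
  have hw₁ : 1 ≤ w 1 := by simp [w]
  have hQ₀ := sub_X_two_mem_weightedOrderIdeal hw₁ le_rfl hQ
  have hQ₁ := sub_X_two_mem_weightedOrderIdeal (w := ![0, 1, 1]) le_rfl le_rfl hQ
  have hGbar₀ : constantCoeff (pscomp (psConj G) ![X 1, X 2] : MvPowerSeries (Fin 3) ℂ) = 0 := by
    rw [pscomp_X_one_X_two, constantCoeff_rename, constantCoeff_psConj, hG0, map_zero]
  have hbar_mem {H : MvPowerSeries (Fin 2) ℂ} (hH : constantCoeff H = 0) :
      pscomp (psConj H) ![X 1, X 2] ∈ weightedOrderIdeal w 1 :=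
    pscomp_X_one_X_two_mem_weightedOrderIdeal hw₁ le_rfl
      (by rw [constantCoeff_psConj, hH, map_zero])
  set d : Fin 3 →₀ ℕ := single 0 j + single 2 ℓ
  have hd : weight w d < m + 1 := by simp [d, w, weight_single]; omega
  calc coeff (single 0 j + single 1 ℓ) G
      = coeff d (pscomp G ![X 0, Q]) := by
        rw [coeff_pscomp_X_zero_eq_of_sub_X_two_mem hQ₀ G hd,
          coeff_single_add_single_rename_zero_two]
    _ = coeff d (pscomp (psConj G) ![X 1, X 2]) := by
        rw [hmap]
        refine coeff_pscomp_eq_of_sub_X_mem hQ₁ (fun i => ?_) hGbar₀ hd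
        fin_cases i
        exacts [by simp, hbar_mem hF0, hbar_mem hG0]
    _ = if j = 0 then conj (coeff (single 1 ℓ) G) else 0 := by
        rw [pscomp_X_one_X_two, coeff_single_add_single_rename_one_two, coeff_psConj]

theorem stmt12_general (m : ℕ)
    (Θ Q : MvPowerSeries (Fin 3) ℂ)
    (hQ : Q = MvPowerSeries.X 2 +
      MvPowerSeries.C (σ := Fin 3) (R := ℂ) Complex.I *
        (MvPowerSeries.X 2 ^ m * MvPowerSeries.X 0 * MvPowerSeries.X 1) +
      MvPowerSeries.X 2 ^ (m + 1) * Θ)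
    (F G : MvPowerSeries (Fin 2) ℂ)
    (hF0 : MvPowerSeries.constantCoeff (σ := Fin 2) (R := ℂ) F = 0)
    (hG0 : MvPowerSeries.constantCoeff (σ := Fin 2) (R := ℂ) G = 0)
    (hmap : pscomp G ![MvPowerSeries.X 0, Q] =
      pscomp Q ![pscomp F ![MvPowerSeries.X 0, Q],
        pscomp (psConj F) ![MvPowerSeries.X 1, MvPowerSeries.X 2],
        pscomp (psConj G) ![MvPowerSeries.X 1, MvPowerSeries.X 2]]) :
    ∀ ℓ : ℕ, ℓ ≤ m →
      (∀ j : ℕ, 1 ≤ j →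
        MvPowerSeries.coeff (R := ℂ)
          (Finsupp.single (0 : Fin 2) j + Finsupp.single (1 : Fin 2) ℓ) G = 0) ∧
      conj (MvPowerSeries.coeff (R := ℂ) (Finsupp.single (1 : Fin 2) ℓ) G) =
        MvPowerSeries.coeff (R := ℂ) (Finsupp.single (1 : Fin 2) ℓ) G := by
  intro ℓ hℓ
  have key (j : ℕ) := coeff_eq_ite_conj_of_mapping_identity hQ hF0 hG0 hmap j hℓ
  refine ⟨fun j hj => by simpa [Nat.one_le_iff_ne_zero.mp hj] using key j, ?_⟩
  simpa using (key 0).symm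

/-- Case `n = 1` of Lemma 3.2: if `Q(z,χ,τ) = τ + iτ^m zχ + τ^{m+1}Θ` and
`(F,G)` satisfies the mapping identity
`G(z,Q(z,χ,τ)) = Q(F(z,Q(z,χ,τ)), F̄(χ,τ), Ḡ(χ,τ))` with `F(0,0)=G(0,0)=0`,
`G(z,0)=0`, `F(z,0) ≢ 0`, then for `ℓ ≤ m` the coefficient function
`∂^ℓG/∂w^ℓ(z,0)` is a real constant.  Variables: `Fin 3 = (z,χ,τ)`,
`Fin 2 = (z,w)` (resp. `(χ,τ)`). -/
theorem stmt12 (m : ℕ) (hm : 1 ≤ m)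
    (Θ Q : MvPowerSeries (Fin 3) ℂ)
    (hQ : Q = MvPowerSeries.X 2 +
      MvPowerSeries.C (σ := Fin 3) (R := ℂ) Complex.I *
        (MvPowerSeries.X 2 ^ m * MvPowerSeries.X 0 * MvPowerSeries.X 1) +
      MvPowerSeries.X 2 ^ (m + 1) * Θ)
    (F G : MvPowerSeries (Fin 2) ℂ)
    (hF0 : MvPowerSeries.constantCoeff (σ := Fin 2) (R := ℂ) F = 0)
    (hG0 : MvPowerSeries.constantCoeff (σ := Fin 2) (R := ℂ) G = 0)
    (hGz0 : ∀ j : ℕ, MvPowerSeries.coeff (R := ℂ) (Finsupp.single (0 : Fin 2) j) G = 0)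
    (hFz0 : ∃ j : ℕ, MvPowerSeries.coeff (R := ℂ) (Finsupp.single (0 : Fin 2) j) F ≠ 0)
    (hmap : pscomp G ![MvPowerSeries.X 0, Q] =
      pscomp Q ![pscomp F ![MvPowerSeries.X 0, Q],
        pscomp (psConj F) ![MvPowerSeries.X 1, MvPowerSeries.X 2],
        pscomp (psConj G) ![MvPowerSeries.X 1, MvPowerSeries.X 2]]) :
    ∀ ℓ : ℕ, ℓ ≤ m →
      (∀ j : ℕ, 1 ≤ j →
        MvPowerSeries.coeff (R := ℂ)
          (Finsupp.single (0 : Fin 2) j + Finsupp.single (1 : Fin 2) ℓ) G = 0) ∧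
      conj (MvPowerSeries.coeff (R := ℂ) (Finsupp.single (1 : Fin 2) ℓ) G) =
        MvPowerSeries.coeff (R := ℂ) (Finsupp.single (1 : Fin 2) ℓ) G :=
  stmt12_general m Θ Q hQ F G hF0 hG0 hmap
end

section
/- Let F(s,u) be a real-analytic function near (0,0) ∈ ℝ×ℝ with F(0,0) = 0, and suppose λ := ∂F/∂u(0,0) is not a positive integer. Then there is at most one real-analytic function u defined near 0 ∈ ℝ with u(0) = 0 satisfying the singular ODE s·u'(s) = F(s, u(s)) for all s near 0. -/
open scoped Topology

open Filter Asymptotics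

/-!
If `u ≠ v`, the difference `w = u - v` vanishes at `0` to some finite order `m ≥ 1`, so the
logarithmic residue `s · w'(s) / w(s)` tends to `m`. Subtracting the two equations, the same
quantity equals `(F(s, u) - F(s, v)) / (u - v)`, which tends to `λ = ∂F/∂u(0,0)` by strict
differentiability of `F`. Hence `λ = m` would be a positive integer.
-/

theorem AnalyticAt.tendsto_mul_logDeriv_of_analyticOrderAt_eq {𝕜 : Type*}
    [NontriviallyNormedField 𝕜] [CompleteSpace 𝕜] {f : 𝕜 → 𝕜} {x : 𝕜} {n : ℕ}
    (hf : AnalyticAt 𝕜 f x) (hn : analyticOrderAt f x = n) :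
    Tendsto (fun w ↦ (w - x) * logDeriv f w) (𝓝[≠] x) (𝓝 n) := by
  obtain ⟨g, hg, hgx, hfg⟩ := hf.analyticOrderAt_eq_natCast.mp hn
  have hfactor : ∀ᶠ w in 𝓝[≠] x, (w - x) * logDeriv f w = n + (w - x) * logDeriv g w := by
    filter_upwards [nhdsWithin_le_nhds (logDeriv_congr_nhds hfg),
      nhdsWithin_le_nhds (hg.continuousAt.eventually_ne hgx),
      nhdsWithin_le_nhds hg.eventually_analyticAt, self_mem_nhdsWithin]
      with w hfw hgw hgan (hw : w ≠ x)
    have hwx : w - x ≠ 0 := sub_ne_zero.mpr hw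
    rw [hfw]
    simp only [smul_eq_mul]
    rw [logDeriv_mul (f := fun w ↦ (w - x) ^ n) w (pow_ne_zero n hwx) hgw (by fun_prop)
      hgan.differentiableAt, logDeriv_fun_pow (by fun_prop)]
    simp only [logDeriv_apply, deriv_fun_sub, differentiableAt_fun_id, differentiableAt_const,
      deriv_id'', deriv_const', sub_zero]
    field_simp
  have hlim : Tendsto (fun w ↦ (n : 𝕜) + (w - x) * logDeriv g w) (𝓝 x)
      (𝓝 (n + (x - x) * logDeriv g x)) :=
    tendsto_const_nhds.add (((continuous_sub_right x).tendsto x).mul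
      (hg.deriv.continuousAt.div hg.continuousAt hgx))
  rw [sub_self, zero_mul, add_zero] at hlim
  exact (hlim.mono_left nhdsWithin_le_nhds).congr' (hfactor.mono fun w hw ↦ hw.symm)

theorem HasStrictFDerivAt.isLittleO_sub_sub_partial {α 𝕜 E F G : Type*}
    [NontriviallyNormedField 𝕜] [NormedAddCommGroup E] [NormedSpace 𝕜 E]
    [NormedAddCommGroup F] [NormedSpace 𝕜 F] [NormedAddCommGroup G] [NormedSpace 𝕜 G] {f : E × F → G} {L : E × F →L[𝕜] G} {p : E × F}
    (hf : HasStrictFDerivAt f L p) {l : Filter α} {x : α → E} {y z : α → F}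
    (hy : Tendsto (fun t ↦ (x t, y t)) l (𝓝 p)) (hz : Tendsto (fun t ↦ (x t, z t)) l (𝓝 p)) :
    (fun t ↦ f (x t, y t) - f (x t, z t) - L (0, y t - z t)) =o[l] fun t ↦ y t - z t := by
  have hdiff : ∀ t, (x t, y t) - (x t, z t) = (0, y t - z t) := fun t ↦ by simp
  refine ((hf.isLittleO.comp_tendsto (hy.prodMk_nhds hz)).congr (fun t ↦ ?_) hdiff).trans_isBigO
    (isBigO_of_le _ fun t ↦ ?_)
  · simp only [Function.comp_apply, hdiff]
  · simp [Prod.norm_def]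

theorem HasStrictFDerivAt.tendsto_sub_div_sub {α 𝕜 E : Type*} [NontriviallyNormedField 𝕜]
    [NormedAddCommGroup E] [NormedSpace 𝕜 E] {f : E × 𝕜 → 𝕜} {L : E × 𝕜 →L[𝕜] 𝕜} {p : E × 𝕜}
    (hf : HasStrictFDerivAt f L p) {l : Filter α} {x : α → E} {y z : α → 𝕜}
    (hy : Tendsto (fun t ↦ (x t, y t)) l (𝓝 p)) (hz : Tendsto (fun t ↦ (x t, z t)) l (𝓝 p))
    (hyz : ∀ᶠ t in l, y t ≠ z t) :
    Tendsto (fun t ↦ (f (x t, y t) - f (x t, z t)) / (y t - z t)) l (𝓝 (L (0, 1))) := by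
  have hL : ∀ c : 𝕜, L (0, c) = c * L (0, 1) := fun c ↦ by
    rw [← smul_eq_mul, ← map_smul]; simp
  have hrem : Tendsto
      (fun t ↦ (f (x t, y t) - f (x t, z t) - (y t - z t) * L (0, 1)) / (y t - z t)) l (𝓝 0) :=
    (hf.isLittleO_sub_sub_partial hy hz).tendsto_div_nhds_zero.congr fun t ↦ by rw [hL]
  refine (zero_add (L (0, 1)) ▸ hrem.add_const (L (0, 1))).congr' (hyz.mono fun t ht ↦ ?_)
  have : y t - z t ≠ 0 := sub_ne_zero.mpr ht
  field_simp
  ring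

theorem stmt14_general (F : ℝ × ℝ → ℝ) (hF : AnalyticAt ℝ F (0, 0))
    (hlam : ¬ ∃ n : ℕ, 0 < n ∧ fderiv ℝ F (0, 0) (0, 1) = n) :
    ∀ u v : ℝ → ℝ,
      AnalyticAt ℝ u 0 → u 0 = 0 → (∀ᶠ s in 𝓝 0, s * deriv u s = F (s, u s)) →
      AnalyticAt ℝ v 0 → v 0 = 0 → (∀ᶠ s in 𝓝 0, s * deriv v s = F (s, v s)) →
      ∀ᶠ s in 𝓝 0, u s = v s := by
  intro u v hu hu0 hue hv hv0 hve
  by_contra hne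
  have hw : AnalyticAt ℝ (fun s ↦ u s - v s) 0 := hu.sub hv
  obtain ⟨m, hm⟩ : ∃ m : ℕ, (m : ℕ∞) = analyticOrderAt (fun s ↦ u s - v s) 0 :=
    ENat.ne_top_iff_exists.mp fun htop ↦
      hne ((analyticOrderAt_eq_top.mp htop).mono fun s ↦ sub_eq_zero.mp)
  have hm0 : m ≠ 0 := by
    rintro rfl
    exact (hw.analyticOrderAt_eq_zero.mp hm.symm) (by simp [hu0, hv0])
  have huv : ∀ᶠ s in 𝓝[≠] 0, u s ≠ v s :=
    (hw.eventually_eq_zero_or_eventually_ne_zero.resolve_left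
      fun h ↦ hne (h.mono fun s ↦ sub_eq_zero.mp)).mono fun s ↦ sub_ne_zero.mp
  have hode : ∀ᶠ s in 𝓝 0, s * logDeriv (fun s ↦ u s - v s) s =
      (F (s, u s) - F (s, v s)) / (u s - v s) := by
    filter_upwards [hue, hve, hu.eventually_analyticAt, hv.eventually_analyticAt]
      with s hus hvs hua hva
    rw [logDeriv_apply, deriv_fun_sub hua.differentiableAt hva.differentiableAt, ← hus, ← hvs,
      ← mul_sub, mul_div_assoc]
  have hgraph : ∀ {w : ℝ → ℝ}, w 0 = 0 → AnalyticAt ℝ w 0 →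
      Tendsto (fun s ↦ (s, w s)) (𝓝[≠] 0) (𝓝 (0, 0)) := fun hw0 hwa ↦
    (tendsto_id.prodMk_nhds (by simpa [hw0] using hwa.continuousAt.tendsto)).mono_left
      nhdsWithin_le_nhds
  have hquot := hF.hasStrictFDerivAt.tendsto_sub_div_sub (hgraph hu0 hu) (hgraph hv0 hv) huv
  have hlogDeriv := (hw.tendsto_mul_logDeriv_of_analyticOrderAt_eq hm.symm).congr'
    ((eventually_nhdsWithin_of_eventually_nhds hode).mono fun s hs ↦ by rw [sub_zero, hs])
  exact hlam ⟨m, Nat.pos_of_ne_zero hm0, tendsto_nhds_unique hquot hlogDeriv⟩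

/-- Uniqueness in the Briot–Bouquet theorem: if `F` is real-analytic near
`(0,0)` with `F(0,0) = 0` and `λ = ∂F/∂u(0,0)` is not a positive integer,
then there is at most one real-analytic `u` near `0` with `u(0) = 0` and
`s·u'(s) = F(s,u(s))` near `0`. -/
theorem stmt14 (F : ℝ × ℝ → ℝ) (hF : AnalyticAt ℝ F (0, 0)) (hF0 : F (0, 0) = 0)
    (hlam : ¬ ∃ n : ℕ, 0 < n ∧ fderiv ℝ F (0, 0) (0, 1) = n) :
    ∀ u v : ℝ → ℝ,
      AnalyticAt ℝ u 0 → u 0 = 0 → (∀ᶠ s in 𝓝 0, s * deriv u s = F (s, u s)) →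
      AnalyticAt ℝ v 0 → v 0 = 0 → (∀ᶠ s in 𝓝 0, s * deriv v s = F (s, v s)) →
      ∀ᶠ s in 𝓝 0, u s = v s :=
  stmt14_general F hF hlam
end

section
/- Let B(z,w) = (z₁w^{α₁},…,z_nw^{α_n}, w²) with integers α_j ≥ 2, let ℓ ≥ max{α_n, 1}, and let Ĥ = (F̂, Ĝ): (ℂ^{n+1},0) → (ℂ^{n+1},0) be a germ of a holomorphic map satisfying Ĝ(z,w) = w + w^{2(ℓ+1)}·δ(z,w) for some holomorphic δ, and F̂(z,w) = z + O(ℓ+1). Suppose M̂ is a germ at 0 of a real-analytic hypersurface of the form Im w = (Re w)^{k}·ρ(z,z̄,Re w) with k ≥ 1 and ρ real-analytic, and 2(ℓ+1) > k. Then the image Ĥ(M̂) is again (the germ of) a real-analytic hypersurface of the form Im w = (Re w)^{k}·ρ'(z,z̄,Re w) for some real-analytic ρ'. -/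
open scoped Topology ComplexConjugate

/-- The real hypersurface `Im w = (Re w)^k · ρ(z, z̄, Re w)` in `ℂⁿ × ℂ`
(`z̄` being determined by `z`, the function `ρ` is recorded as a function
of `(z, s)`). -/
def graphOf' (n k : ℕ) (ρ : (Fin n → ℂ) → ℝ → ℝ) : Set ((Fin n → ℂ) × ℂ) :=
  {p | p.2.im = p.2.re ^ k * ρ p.1 p.2.re}

/-!
Parametrize `M̂` by `χ(z, s) = (z, s + i s^k ρ(z, s))` and write its last coordinate as `s·u`.
Since `k < 2(ℓ+1)`, `Ĝ ∘ χ = s·u + s^{2(ℓ+1)} u^{2(ℓ+1)} δ ∘ χ` has the form `s·v + i s^k·c` with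
`v, c` real-analytic and `v(0) = 1`. The map `β = (F̂ ∘ χ, s·v)` has the identity as derivative at
`0` (as `F̂ = z + O(2)`), so it has an analytic local inverse `ψ`, and `Ĥ(M̂)` is the graph of
`ρ' = (c / v^k) ∘ ψ`, because `s^k c = (s v)^k (c / v^k)`.
-/

open Complex Asymptotics Filter

section Calculus

variable {𝕜 E F : Type*} [NontriviallyNormedField 𝕜]
  [NormedAddCommGroup E] [NormedSpace 𝕜 E] [NormedAddCommGroup F] [NormedSpace 𝕜 F]

theorem hasFDerivAt_of_norm_sub_le_pow {f : E → F} {L : E →L[𝕜] F} {a : E} {C : ℝ} {m : ℕ}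
    (hm : 1 < m) (h : ∀ᶠ x in 𝓝 a, ‖f x - L x‖ ≤ C * ‖x - a‖ ^ m) : HasFDerivAt f L a := by
  have hO : (fun x => f x - L x) =O[𝓝 a] fun x => ‖x - a‖ ^ m :=
    IsBigO.of_bound C <| h.mono fun x hx => by simpa using hx
  convert (hO.hasFDerivAt hm).add L.hasFDerivAt using 1
  · ext x
    simp
  · simp

theorem hasFDerivAt_comp_of_fst_eq {G : Type*} [NormedAddCommGroup G] [NormedSpace 𝕜 G]
    {χ : E × F → E × G} {Φ : E × G → E} {a : E × F} (hχ : DifferentiableAt 𝕜 χ a)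
    (hχ_fst : ∀ q, (χ q).1 = q.1) (hΦ : HasFDerivAt Φ (ContinuousLinearMap.fst 𝕜 E G) (χ a)) :
    HasFDerivAt (fun q => Φ (χ q)) (ContinuousLinearMap.fst 𝕜 E F) a := by
  have hfst : (ContinuousLinearMap.fst 𝕜 E G).comp (fderiv 𝕜 χ a) =
      ContinuousLinearMap.fst 𝕜 E F :=
    (hasFDerivAt_fst.comp a hχ.hasFDerivAt).unique
      (by simpa [Function.comp_def, hχ_fst] using hasFDerivAt_fst)
  exact hfst ▸ hΦ.comp a hχ.hasFDerivAt

theorem AnalyticAt.exists_localInverse [CompleteSpace E] [CompleteSpace F] {f : E → F}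
    {f' : E ≃L[𝕜] F} {a : E} (hf : AnalyticAt 𝕜 f a) (hf' : HasFDerivAt f (f' : E →L[𝕜] F) a) :
    ∃ g : F → E, AnalyticAt 𝕜 g (f a) ∧ g (f a) = a ∧
      (∀ᶠ x in 𝓝 a, g (f x) = x) ∧ ∀ᶠ y in 𝓝 (f a), f (g y) = y := by
  have hs : HasStrictFDerivAt f (f' : E →L[𝕜] F) a := hf'.fderiv ▸ hf.hasStrictFDerivAt
  refine ⟨hs.localInverse f f' a, ?_, hs.localInverse_apply_image, hs.eventually_left_inverse,
    hs.eventually_right_inverse⟩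
  exact (hs.toOpenPartialHomeomorph f).analyticAt_symm'
    hs.mem_toOpenPartialHomeomorph_source hf hf'.fderiv

end Calculus

theorem ofReal_add_mul_I_add_pow_mul {k N : ℕ} (hk : k ≤ N) (hN : 1 ≤ N) (s t : ℝ) (e : ℂ) :
    (s : ℂ) + ↑(s ^ k * t) * I + (s : ℂ) ^ N * e =
      ↑(s * (1 + s ^ (N - 1) * e.re)) + ↑(s ^ k * (t + s ^ (N - k) * e.im)) * I := by
  have h1 : s ^ N = s * s ^ (N - 1) := by rw [← pow_succ']; congr; omega
  have h2 : s ^ N = s ^ k * s ^ (N - k) := by rw [← pow_add]; congr; omega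
  apply Complex.ext
  · simp [← ofReal_pow]
    linear_combination e.re * h1
  · simp [← ofReal_pow]
    linear_combination e.im * h2

section GraphChart

variable {Z : Type*}

def graphParam (k : ℕ) (ρ : Z → ℝ → ℝ) (q : Z × ℝ) : Z × ℂ :=
  (q.1, q.2 + ↑(q.2 ^ k * ρ q.1 q.2) * I)

def graphProj (p : Z × ℂ) : Z × ℝ :=
  (p.1, p.2.re)

def graphUnit (k : ℕ) (ρ : Z → ℝ → ℝ) (q : Z × ℝ) : ℂ :=
  1 + ↑(q.2 ^ (k - 1) * ρ q.1 q.2) * I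

@[simp]
theorem graphParam_fst (k : ℕ) (ρ : Z → ℝ → ℝ) (q : Z × ℝ) : (graphParam k ρ q).1 = q.1 :=
  rfl

@[simp]
theorem graphProj_graphParam (k : ℕ) (ρ : Z → ℝ → ℝ) (q : Z × ℝ) :
    graphProj (graphParam k ρ q) = q := by
  simp [graphProj, graphParam, -ofReal_pow]

@[simp]
theorem graphProj_zero [Zero Z] : graphProj (0 : Z × ℂ) = 0 :=
  Prod.ext rfl zero_re

theorem graphParam_snd_eq_mul_graphUnit {k : ℕ} (hk : 1 ≤ k) (ρ : Z → ℝ → ℝ) (q : Z × ℝ) :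
    (graphParam k ρ q).2 = q.2 * graphUnit k ρ q := by
  obtain ⟨k, rfl⟩ := Nat.exists_eq_add_of_le' hk
  simp only [graphParam, graphUnit, Nat.add_sub_cancel]
  push_cast
  ring

theorem continuous_graphProj [TopologicalSpace Z] : Continuous (graphProj : Z × ℂ → Z × ℝ) := by
  unfold graphProj
  fun_prop

theorem AnalyticAt.graphParam [NormedAddCommGroup Z] [NormedSpace ℝ Z] {k : ℕ} {ρ : Z → ℝ → ℝ}
    {a : Z × ℝ} (hρ : AnalyticAt ℝ (fun q : Z × ℝ => ρ q.1 q.2) a) :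
    AnalyticAt ℝ (graphParam k ρ) a :=
  analyticAt_fst.prod (((ofRealCLM.analyticAt _).comp analyticAt_snd).add
    (((ofRealCLM.analyticAt _).comp ((analyticAt_snd.pow k).mul hρ)).mul analyticAt_const))

theorem AnalyticAt.graphUnit [NormedAddCommGroup Z] [NormedSpace ℝ Z] {k : ℕ} {ρ : Z → ℝ → ℝ}
    {a : Z × ℝ} (hρ : AnalyticAt ℝ (fun q : Z × ℝ => ρ q.1 q.2) a) :
    AnalyticAt ℝ (graphUnit k ρ) a :=
  analyticAt_const.add
    (((ofRealCLM.analyticAt _).comp ((analyticAt_snd.pow _).mul hρ)).mul analyticAt_const)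

end GraphChart

section Hypersurface

variable {n : ℕ}

theorem graphParam_mem_graphOf' (k : ℕ) (ρ : (Fin n → ℂ) → ℝ → ℝ) (q : (Fin n → ℂ) × ℝ) :
    graphParam k ρ q ∈ graphOf' n k ρ := by
  simp [graphOf', graphParam, -ofReal_pow]

theorem graphParam_graphProj_of_mem {k : ℕ} {ρ : (Fin n → ℂ) → ℝ → ℝ} {p : (Fin n → ℂ) × ℂ}
    (hp : p ∈ graphOf' n k ρ) : graphParam k ρ (graphProj p) = p := by
  refine Prod.ext rfl (Complex.ext ?_ ?_)
  · simp [graphParam, graphProj, -ofReal_pow]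
  · simpa [graphParam, graphProj, -ofReal_pow] using hp.symm

theorem image_graphOf'_inter_eq {k : ℕ} {ρ ρ' : (Fin n → ℂ) → ℝ → ℝ}
    {Φ : (Fin n → ℂ) × ℂ → (Fin n → ℂ) × ℂ} {β ψ : (Fin n → ℂ) × ℝ → (Fin n → ℂ) × ℝ}
    {Ω Ω' : Set ((Fin n → ℂ) × ℝ)}
    (hΦ : ∀ q ∈ Ω, Φ (graphParam k ρ q) = graphParam k ρ' (β q))
    (hψ : ∀ y ∈ Ω', β (ψ y) = y ∧ ψ y ∈ Ω) :
    Φ '' (graphOf' n k ρ ∩ graphProj ⁻¹' Ω) ∩ graphProj ⁻¹' Ω' =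
      graphOf' n k ρ' ∩ graphProj ⁻¹' Ω' := by
  ext x
  constructor
  · rintro ⟨⟨p, ⟨hp, hpΩ⟩, rfl⟩, hxΩ'⟩
    refine ⟨?_, hxΩ'⟩
    rw [← graphParam_graphProj_of_mem hp, hΦ _ hpΩ]
    exact graphParam_mem_graphOf' k ρ' _
  · rintro ⟨hx, hxΩ'⟩
    obtain ⟨hβψ, hψΩ⟩ := hψ _ hxΩ'
    refine ⟨⟨graphParam k ρ (ψ (graphProj x)), ⟨graphParam_mem_graphOf' k ρ _, ?_⟩, ?_⟩, hxΩ'⟩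
    · simpa using hψΩ
    · rw [hΦ _ hψΩ, hβψ, graphParam_graphProj_of_mem hx]

theorem exists_image_graphOf'_inter_eq {k : ℕ} {ρ : (Fin n → ℂ) → ℝ → ℝ}
    {Φ : (Fin n → ℂ) × ℂ → (Fin n → ℂ) × ℂ} {f : (Fin n → ℂ) × ℝ → Fin n → ℂ}
    {v c : (Fin n → ℂ) × ℝ → ℝ} (hf : AnalyticAt ℝ f 0) (hf0 : f 0 = 0)
    (hf' : HasFDerivAt f (ContinuousLinearMap.fst ℝ (Fin n → ℂ) ℝ) 0)
    (hv : AnalyticAt ℝ v 0) (hv0 : v 0 = 1) (hc : AnalyticAt ℝ c 0)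
    (hΦ : ∀ᶠ q in 𝓝 0, Φ (graphParam k ρ q) = (f q, ↑(q.2 * v q) + ↑(q.2 ^ k * c q) * I)) :
    ∃ ρ' : (Fin n → ℂ) → ℝ → ℝ,
      AnalyticAt ℝ (fun q : (Fin n → ℂ) × ℝ => ρ' q.1 q.2) 0 ∧
      ∃ U ∈ 𝓝 (0 : (Fin n → ℂ) × ℂ), ∃ V ∈ 𝓝 (0 : (Fin n → ℂ) × ℂ),
        Φ '' (graphOf' n k ρ ∩ U) ∩ V = graphOf' n k ρ' ∩ V := by
  set β : (Fin n → ℂ) × ℝ → (Fin n → ℂ) × ℝ := fun q => (f q, q.2 * v q)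
  have hβ0 : β 0 = 0 := by simp [β, hf0]
  have hβ : AnalyticAt ℝ β 0 := hf.prod (analyticAt_snd.mul hv)
  have hβ' : HasFDerivAt β
      (ContinuousLinearEquiv.refl ℝ ((Fin n → ℂ) × ℝ) : (Fin n → ℂ) × ℝ →L[ℝ] _) 0 := by
    simpa [hv0, ContinuousLinearMap.fst_prod_snd] using
      hf'.prodMk (hasFDerivAt_snd.mul hv.differentiableAt.hasFDerivAt)
  obtain ⟨ψ, hψ, hψ0, hψβ, hβψ⟩ := hβ.exists_localInverse hβ'
  rw [hβ0] at hψ hψ0 hβψ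
  obtain ⟨Ω, hΩ, hΩ_spec⟩ :=
    (hΦ.and (hψβ.and (hv.continuousAt.eventually_ne (by rw [hv0]; exact one_ne_zero)))).exists_mem
  obtain ⟨Ω', hΩ', hΩ'_spec⟩ : ∃ Ω' ∈ 𝓝 0, ∀ y ∈ Ω', β (ψ y) = y ∧ ψ y ∈ Ω :=
    (hβψ.and (hψ.continuousAt.preimage_mem_nhds (by rwa [hψ0]))).exists_mem
  have hgraphProj : ∀ s ∈ 𝓝 (0 : (Fin n → ℂ) × ℝ), graphProj ⁻¹' s ∈ 𝓝 0 := fun s hs =>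
    continuous_graphProj.continuousAt.preimage_mem_nhds (by rwa [graphProj_zero])
  refine ⟨fun z s => c (ψ (z, s)) / v (ψ (z, s)) ^ k, ?_, graphProj ⁻¹' Ω, hgraphProj Ω hΩ,
    graphProj ⁻¹' Ω', hgraphProj Ω' hΩ', image_graphOf'_inter_eq ?_ hΩ'_spec⟩
  · rw [← hψ0] at hc hv
    exact (hc.comp hψ).div ((hv.comp hψ).pow k) (by simp [Prod.mk_zero_zero, hψ0, hv0])
  · intro q hq
    obtain ⟨hΦq, hψβq, hvq⟩ := hΩ_spec q hq
    rw [hΦq]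
    have hc_eq : (q.2 * v q) ^ k * (c q / v q ^ k) = q.2 ^ k * c q := by
      field_simp [pow_ne_zero k hvq]
      ring
    simp only [graphParam, β, hψβq, hc_eq]

end Hypersurface

theorem stmt18_general (n : ℕ)
    (ℓ : ℕ) (hℓ1 : 1 ≤ ℓ)
    (k : ℕ) (hk : 1 ≤ k) (hkℓ : k < 2 * (ℓ + 1))
    (Fh : (Fin n → ℂ) × ℂ → Fin n → ℂ) (Gh : (Fin n → ℂ) × ℂ → ℂ)
    (δ : (Fin n → ℂ) × ℂ → ℂ)
    (hFh : AnalyticAt ℂ Fh 0) (hδ : AnalyticAt ℂ δ 0)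
    (hGh : ∀ᶠ p in 𝓝 (0 : (Fin n → ℂ) × ℂ),
      Gh p = p.2 + p.2 ^ (2 * (ℓ + 1)) * δ p)
    (hFord : ∃ C : ℝ, ∀ᶠ p in 𝓝 (0 : (Fin n → ℂ) × ℂ),
      ‖Fh p - p.1‖ ≤ C * ‖p‖ ^ (ℓ + 1))
    (ρ : (Fin n → ℂ) → ℝ → ℝ)
    (hρ : AnalyticAt ℝ (fun q : (Fin n → ℂ) × ℝ => ρ q.1 q.2) 0) :
    ∃ ρ' : (Fin n → ℂ) → ℝ → ℝ,
      AnalyticAt ℝ (fun q : (Fin n → ℂ) × ℝ => ρ' q.1 q.2) 0 ∧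
      ∃ U ∈ 𝓝 (0 : (Fin n → ℂ) × ℂ), ∃ V ∈ 𝓝 (0 : (Fin n → ℂ) × ℂ),
        (fun p => (Fh p, Gh p)) '' (graphOf' n k ρ ∩ U) ∩ V =
          graphOf' n k ρ' ∩ V := by
  obtain ⟨C, hC⟩ := hFord
  set N := 2 * (ℓ + 1)
  set χ := graphParam k ρ
  have hχ : AnalyticAt ℝ χ 0 := hρ.graphParam
  have hχ0 : χ 0 = 0 := by simp [χ, graphParam, zero_pow (by omega : k ≠ 0), Prod.ext_iff]
  have hFh' : HasFDerivAt Fh (ContinuousLinearMap.fst ℝ (Fin n → ℂ) ℂ) 0 :=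
    hasFDerivAt_of_norm_sub_le_pow (m := ℓ + 1) (by omega) (by simpa using hC)
  have hFh0 : Fh 0 = 0 := by simpa using hC.self_of_nhds
  set E : (Fin n → ℂ) × ℝ → ℂ := fun q => graphUnit k ρ q ^ N * δ (χ q)
  have hE : AnalyticAt ℝ E 0 :=
    (hρ.graphUnit.pow N).mul ((hχ0 ▸ hδ.restrictScalars).comp hχ)
  apply exists_image_graphOf'_inter_eq (f := fun q => Fh (χ q))
    (v := fun q => 1 + q.2 ^ (N - 1) * (E q).re)
    (c := fun q => ρ q.1 q.2 + q.2 ^ (N - k) * (E q).im)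
  · exact (hχ0 ▸ hFh.restrictScalars).comp hχ
  · simp [hχ0, hFh0]
  · exact hasFDerivAt_comp_of_fst_eq hχ.differentiableAt (graphParam_fst k ρ) (hχ0 ▸ hFh')
  · exact analyticAt_const.add ((analyticAt_snd.pow _).mul ((reCLM.analyticAt _).comp hE))
  · simp [zero_pow (by omega : N - 1 ≠ 0)]
  · exact hρ.add ((analyticAt_snd.pow _).mul ((imCLM.analyticAt _).comp hE))
  · have hχ_tendsto : Tendsto χ (𝓝 0) (𝓝 0) := hχ0 ▸ hχ.continuousAt.tendsto
    filter_upwards [hχ_tendsto.eventually hGh] with q hq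
    rw [hq]
    nth_rewrite 2 [graphParam_snd_eq_mul_graphUnit hk]
    rw [mul_pow, mul_assoc]
    exact congrArg _ (ofReal_add_mul_I_add_pow_mul hkℓ.le (by omega) q.2 (ρ q.1 q.2) (E q))

/-- Final step of Proposition 5.2: if `Ĥ = (F̂,Ĝ)` is a germ of a holomorphic
map at `0` with `Ĝ(z,w) = w + w^{2(ℓ+1)}δ(z,w)`, `F̂(z,w) = z + O(ℓ+1)`,
`ℓ ≥ max{α_n,1}`, and `M̂` is a germ of a real-analytic hypersurface
`Im w = (Re w)^k ρ(z,z̄,Re w)` with `1 ≤ k < 2(ℓ+1)`, then the image `Ĥ(M̂)`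
is again a germ of a hypersurface of the form `Im w = (Re w)^k ρ'(z,z̄,Re w)`. -/
theorem stmt18 (n : ℕ) (hn : 1 ≤ n) (α : Fin n → ℕ) (hα : ∀ j, 2 ≤ α j)
    (ℓ : ℕ) (hℓ1 : 1 ≤ ℓ) (hℓα : ∀ j, α j ≤ ℓ)
    (k : ℕ) (hk : 1 ≤ k) (hkℓ : k < 2 * (ℓ + 1))
    (Fh : (Fin n → ℂ) × ℂ → Fin n → ℂ) (Gh : (Fin n → ℂ) × ℂ → ℂ)
    (δ : (Fin n → ℂ) × ℂ → ℂ)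
    (hFh : AnalyticAt ℂ Fh 0) (hδ : AnalyticAt ℂ δ 0)
    (hGh : ∀ᶠ p in 𝓝 (0 : (Fin n → ℂ) × ℂ),
      Gh p = p.2 + p.2 ^ (2 * (ℓ + 1)) * δ p)
    (hFord : ∃ C : ℝ, ∀ᶠ p in 𝓝 (0 : (Fin n → ℂ) × ℂ),
      ‖Fh p - p.1‖ ≤ C * ‖p‖ ^ (ℓ + 1))
    (ρ : (Fin n → ℂ) → ℝ → ℝ)
    (hρ : AnalyticAt ℝ (fun q : (Fin n → ℂ) × ℝ => ρ q.1 q.2) 0) :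
    ∃ ρ' : (Fin n → ℂ) → ℝ → ℝ,
      AnalyticAt ℝ (fun q : (Fin n → ℂ) × ℝ => ρ' q.1 q.2) 0 ∧
      ∃ U ∈ 𝓝 (0 : (Fin n → ℂ) × ℂ), ∃ V ∈ 𝓝 (0 : (Fin n → ℂ) × ℂ),
        (fun p => (Fh p, Gh p)) '' (graphOf' n k ρ ∩ U) ∩ V =
          graphOf' n k ρ' ∩ V :=
  stmt18_general n ℓ hℓ1 k hk hkℓ Fh Gh δ hFh hδ hGh hFord ρ hρ
end
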